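/- Let d ≥ 2 and let (A_i)_{i=1}^{d²} be a COB on ℂ^d. Let m_i denote the smallest eigenvalue of A_i and set τ := max_{i} |m_i| and λ* := 1/(1 + d²τ). Then τ ≥ (√(d+1) − 1)/d², equivalently λ* ≤ 1/√(d+1). Moreover, equality holds if and only if every A_i has the eigenvalue (1 + (d−1)√(d+1))/d² with multiplicity 1 and the eigenvalue (1 − √(d+1))/d² with multiplicity d−1. -/

import Mathlib

/-!
The eigenvalues `x₁, …, x_d` of each `A i` satisfy `∑ x_k = tr A_i = 1/d` (multiply `A_i` by
`∑ j, A j = 1` and use orthogonality) and `∑ x_k² = tr A_i² = 1/d`. If `m` is the smallest of them,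
the numbers `x_k - m` are nonnegative, so `(∑ (x_k - m))² ≥ ∑ (x_k - m)²`. Expanded, this reads
`(d - 1) d (m - (1 - √(d+1))/d²) (m - (1 + √(d+1))/d²) ≥ 0`, and as `m` is at most the mean `1/d²`
it forces `m ≤ (1 - √(d+1))/d²`. In the equality case all but one of the `x_k - m` vanish, which
pins down the spectrum. The claims on `τ` and `λ*` follow since both are monotone in the `|m i|`.
-/

open Finset

namespace Matrix.IsHermitian

variable {𝕜 n : Type*} [RCLike 𝕜] [Fintype n] [DecidableEq n] {A : Matrix n n 𝕜}

theorem trace_mul_self_eq_sum_sq_eigenvalues (hA : A.IsHermitian) :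
    (A * A).trace = ∑ i, (hA.eigenvalues i : 𝕜) ^ 2 := by
  conv_lhs => rw [hA.spectral_theorem, ← map_mul]
  rw [Unitary.conjStarAlgAut_apply, trace_mul_cycle,
    Unitary.coe_star_mul_self, one_mul, diagonal_mul_diagonal, trace_diagonal]
  simp [sq]

end Matrix.IsHermitian

theorem Matrix.trace_eq_of_trace_mul_eq_ite_of_sum_eq_one {ι n R : Type*} [Fintype ι]
    [DecidableEq ι] [Fintype n] [DecidableEq n] [Semiring R] {A : ι → Matrix n n R} {c : R}
    (horth : ∀ i j, (A i * A j).trace = if i = j then c else 0) (hsum : ∑ i, A i = 1) (i : ι) :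
    (A i).trace = c := by
  rw [← mul_one (A i), ← hsum, mul_sum, trace_sum]
  simp [horth]

theorem Matrix.IsHermitian.sum_eigenvalues_eq_and_sum_sq_eigenvalues_eq {ι n 𝕜 : Type*}
    [RCLike 𝕜] [Fintype ι] [DecidableEq ι] [Fintype n] [DecidableEq n] {A : ι → Matrix n n 𝕜}
    (hA : ∀ i, (A i).IsHermitian) {c : ℝ}
    (horth : ∀ i j, (A i * A j).trace = if i = j then (c : 𝕜) else 0) (hsum : ∑ i, A i = 1)
    (i : ι) : ∑ k, (hA i).eigenvalues k = c ∧ ∑ k, (hA i).eigenvalues k ^ 2 = c := by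
  have htr := Matrix.trace_eq_of_trace_mul_eq_ite_of_sum_eq_one horth hsum i
  have htr2 := horth i i
  rw [(hA i).trace_eq_sum_eigenvalues] at htr
  rw [if_pos rfl, (hA i).trace_mul_self_eq_sum_sq_eigenvalues] at htr2
  exact ⟨RCLike.ofReal_injective (by push_cast; exact htr),
    RCLike.ofReal_injective (by push_cast; exact htr2)⟩

theorem exists_forall_ne_eq_zero_of_sq_sum_le_sum_sq {ι : Type*} [Fintype ι] [Nonempty ι]
    {z : ι → ℝ} (hz : ∀ i, 0 ≤ z i) (h : (∑ i, z i) ^ 2 ≤ ∑ i, z i ^ 2) :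
    ∃ k, ∀ j ≠ k, z j = 0 := by
  classical
  obtain ⟨k, hk⟩ := Finite.exists_max z
  set R := ∑ j ∈ univ.erase k, z j
  have hR : 0 ≤ R := sum_nonneg fun j _ => hz j
  have hsplit : ∑ i, z i = z k + R := (add_sum_erase _ _ (mem_univ k)).symm
  have hsq : ∑ i, z i ^ 2 ≤ z k * ∑ i, z i := by
    rw [mul_sum]
    exact sum_le_sum fun j _ => by rw [sq]; exact mul_le_mul_of_nonneg_right (hk j) (hz j)
  have hR0 : R = 0 := by nlinarith [hz k]
  refine ⟨k, fun j hj => ?_⟩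
  exact (sum_eq_zero_iff_of_nonneg fun i _ => hz i).mp hR0 j (mem_erase.mpr ⟨hj, mem_univ j⟩)

theorem ciSup_eq_iff_forall_eq_of_le {ι α : Type*} [Finite ι] [Nonempty ι]
    [ConditionallyCompleteLinearOrder α] {f : ι → α} {b : α} (h : ∀ i, b ≤ f i) :
    ⨆ i, f i = b ↔ ∀ i, f i = b := by
  refine ⟨fun hb i => le_antisymm (hb ▸ le_ciSup (Set.finite_range f).bddAbove i) (h i),
    fun hb => ?_⟩
  simp [hb]

theorem card_filter_eq_one_and_card_filter_eq_iff {ι α : Type*} [Fintype ι] [DecidableEq α]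
    {x : ι → α} {a c : α} (hac : a ≠ c) :
    #{k | x k = a} = 1 ∧ #{k | x k = c} = Fintype.card ι - 1 ↔
      ∃ k, x k = a ∧ ∀ j ≠ k, x j = c := by
  classical
  constructor
  · rintro ⟨ha, hc⟩
    obtain ⟨k, hk⟩ := card_eq_one.mp ha
    have hka : x k = a := by
      have : k ∈ ({k | x k = a} : Finset ι) := hk ▸ mem_singleton_self k
      simpa using this
    have hdisj : Disjoint ({k | x k = a} : Finset ι) ({k | x k = c} : Finset ι) :=
      disjoint_filter.mpr fun j _ (hja : x j = a) hjc => hac (hja.symm.trans hjc)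
    have hcover : ({k | x k = a} : Finset ι) ∪ ({k | x k = c} : Finset ι) = univ := by
      refine eq_univ_of_card _ ?_
      rw [card_union_of_disjoint hdisj, ha, hc]
      have : 0 < Fintype.card ι := Fintype.card_pos_iff.mpr ⟨k⟩
      omega
    refine ⟨k, hka, fun j hj => ?_⟩
    have hmem := hcover.symm ▸ mem_univ j
    rw [mem_union, hk, mem_singleton] at hmem
    simpa [hj] using hmem
  · rintro ⟨k, hka, hkc⟩
    have hA : ({k | x k = a} : Finset ι) = {k} := by
      ext j
      by_cases hj : j = k <;> simp [hj, hka, hkc, hac.symm]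
    have hC : ({k | x k = c} : Finset ι) = univ.erase k := by
      ext j
      by_cases hj : j = k <;> simp [hj, hka, hkc, hac]
    rw [hA, hC, card_singleton, card_erase_of_mem (mem_univ k), card_univ]
    exact ⟨rfl, rfl⟩

noncomputable def extremalLowEigenvalue (d : ℕ) : ℝ := (1 - √((d : ℝ) + 1)) / (d : ℝ) ^ 2

noncomputable def extremalHighEigenvalue (d : ℕ) : ℝ :=
  (1 + ((d : ℝ) - 1) * √((d : ℝ) + 1)) / (d : ℝ) ^ 2

theorem extremalLowEigenvalue_lt_extremalHighEigenvalue {d : ℕ} (hd : d ≠ 0) :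
    extremalLowEigenvalue d < extremalHighEigenvalue d := by
  have hs : 0 < √((d : ℝ) + 1) := Real.sqrt_pos.mpr (by positivity)
  have hd' : (0 : ℝ) < d := by positivity
  unfold extremalLowEigenvalue extremalHighEigenvalue
  gcongr
  nlinarith

theorem extremalLowEigenvalue_nonpos (d : ℕ) : extremalLowEigenvalue d ≤ 0 :=
  div_nonpos_of_nonpos_of_nonneg (sub_nonpos.mpr (Real.one_le_sqrt.mpr (by simp))) (sq_nonneg _)

theorem extremalHighEigenvalue_add_mul_extremalLowEigenvalue {d : ℕ} (hd : d ≠ 0) :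
    extremalHighEigenvalue d + (d - 1) * extremalLowEigenvalue d = 1 / d := by
  unfold extremalLowEigenvalue extremalHighEigenvalue
  field_simp
  ring

section

variable {ι : Type*} [Fintype ι] {d : ℕ} {x : ι → ℝ}

theorem sq_sum_sub_sub_sum_sq_sub (hd : d ≠ 0) (hcard : Fintype.card ι = d)
    (hsum : ∑ k, x k = 1 / d) (hsq : ∑ k, x k ^ 2 = 1 / d) (m : ℝ) :
    (∑ k, (x k - m)) ^ 2 - ∑ k, (x k - m) ^ 2 =
      (d - 1) * d * (m - extremalLowEigenvalue d) * (m - (1 + √((d : ℝ) + 1)) / d ^ 2) := by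
  have hs : √((d : ℝ) + 1) ^ 2 = d + 1 := Real.sq_sqrt (by positivity)
  simp only [sub_sq, sum_add_distrib, sum_sub_distrib, ← sum_mul, ← mul_sum, sum_const,
    card_univ, hcard, nsmul_eq_mul, hsum, hsq]
  unfold extremalLowEigenvalue
  field_simp
  linear_combination ((d : ℝ) - 1) * hs

theorem iInf_le_extremalLowEigenvalue (hd : 2 ≤ d) (hcard : Fintype.card ι = d)
    (hsum : ∑ k, x k = 1 / d) (hsq : ∑ k, x k ^ 2 = 1 / d) :
    ⨅ k, x k ≤ extremalLowEigenvalue d := by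
  have : Nonempty ι := Fintype.card_pos_iff.mp (by omega)
  have hd' : (2 : ℝ) ≤ d := by exact_mod_cast hd
  set m := ⨅ k, x k
  have hm : ∀ k, m ≤ x k := fun k => ciInf_le (Set.finite_range x).bddBelow k
  have hmean : m ≤ 1 / d ^ 2 := by
    have := card_nsmul_le_sum univ x m fun k _ => hm k
    rw [card_univ, hcard, nsmul_eq_mul, hsum] at this
    rw [le_div_iff₀ (by positivity)]
    field_simp at this
    linarith
  have hlt : m < (1 + √((d : ℝ) + 1)) / d ^ 2 :=
    hmean.trans_lt (by gcongr; exact lt_add_of_pos_right 1 (Real.sqrt_pos.mpr (by positivity)))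
  have hquad := sq_sum_sub_sub_sum_sq_sub (by omega) hcard hsum hsq m
  have hnonneg : 0 ≤ (∑ k, (x k - m)) ^ 2 - ∑ k, (x k - m) ^ 2 :=
    sub_nonneg.mpr (sum_sq_le_sq_sum_of_nonneg fun k _ => sub_nonneg.mpr (hm k))
  rw [hquad] at hnonneg
  have hpos : (0 : ℝ) < (d - 1) * d := by nlinarith
  by_contra! hlow
  exact hnonneg.not_gt (mul_neg_of_pos_of_neg (mul_pos hpos (sub_pos.mpr hlow)) (sub_neg.mpr hlt))

theorem iInf_eq_extremalLowEigenvalue_iff (hd : 2 ≤ d) (hcard : Fintype.card ι = d)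
    (hsum : ∑ k, x k = 1 / d) (hsq : ∑ k, x k ^ 2 = 1 / d) :
    ⨅ k, x k = extremalLowEigenvalue d ↔
      ∃ k, x k = extremalHighEigenvalue d ∧ ∀ j ≠ k, x j = extremalLowEigenvalue d := by
  classical
  have : Nonempty ι := Fintype.card_pos_iff.mp (by omega)
  have hlohi := extremalLowEigenvalue_lt_extremalHighEigenvalue (d := d) (by omega)
  constructor
  · intro hm
    have hquad := sq_sum_sub_sub_sum_sq_sub (by omega) hcard hsum hsq (⨅ k, x k)
    rw [hm, sub_self, mul_zero, zero_mul, sub_eq_zero] at hquad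
    obtain ⟨k, hk⟩ := exists_forall_ne_eq_zero_of_sq_sum_le_sum_sq
      (fun j => sub_nonneg.mpr (hm ▸ ciInf_le (Set.finite_range x).bddBelow j)) hquad.le
    have hrest : ∀ j ≠ k, x j = extremalLowEigenvalue d := fun j hj => sub_eq_zero.mp (hk j hj)
    refine ⟨k, ?_, hrest⟩
    have hsplit := add_sum_erase univ x (mem_univ k)
    rw [sum_congr rfl fun j hj => hrest j (ne_of_mem_erase hj), sum_const,
      card_erase_of_mem (mem_univ k), card_univ, hcard, nsmul_eq_mul, hsum,
      Nat.cast_sub (by omega), Nat.cast_one,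
      ← extremalHighEigenvalue_add_mul_extremalLowEigenvalue (by omega)] at hsplit
    linarith
  · rintro ⟨k, hkhi, hrest⟩
    refine le_antisymm (iInf_le_extremalLowEigenvalue hd hcard hsum hsq) (le_ciInf fun j => ?_)
    by_cases hj : j = k
    · exact hj ▸ hkhi ▸ hlohi.le
    · exact (hrest j hj).ge

end

/-- For a COB `(A i)` on `ℂ^d` with smallest eigenvalues `m i`,
`τ := max_i |m i|` and `λ* := 1/(1 + d²τ)`, one has `τ ≥ (√(d+1)-1)/d²`,
equivalently `λ* ≤ 1/√(d+1)`, with equality iff every `A i` has eigenvalue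
`(1 + (d-1)√(d+1))/d²` with multiplicity 1 and `(1 - √(d+1))/d²` with
multiplicity `d-1`. -/
theorem cob_lambdaStar_bound (d : ℕ) (hd : 2 ≤ d)
    (A : Fin (d ^ 2) → Matrix (Fin d) (Fin d) ℂ)
    (hherm : ∀ i, (A i).IsHermitian)
    (horth : ∀ i j, (A i * A j).trace = if i = j then (1 / (d : ℂ)) else 0)
    (hsum : ∑ i, A i = 1)
    (m : Fin (d ^ 2) → ℝ) (hm : ∀ i, m i = ⨅ k, (hherm i).eigenvalues k)
    (τ : ℝ) (hτ : τ = ⨆ i, |m i|)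
    (lamStar : ℝ) (hlam : lamStar = 1 / (1 + d ^ 2 * τ)) :
    (Real.sqrt (d + 1) - 1) / d ^ 2 ≤ τ ∧
    lamStar ≤ 1 / Real.sqrt (d + 1) ∧
    (lamStar = 1 / Real.sqrt (d + 1) ↔
      ∀ i, (Finset.univ.filter fun k =>
              (hherm i).eigenvalues k =
                (1 + ((d : ℝ) - 1) * Real.sqrt (d + 1)) / d ^ 2).card = 1 ∧
           (Finset.univ.filter fun k =>
              (hherm i).eigenvalues k =
                (1 - Real.sqrt (d + 1)) / d ^ 2).card = d - 1) := by
  have : Nonempty (Fin (d ^ 2)) := ⟨⟨0, by positivity⟩⟩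
  have hspec := Matrix.IsHermitian.sum_eigenvalues_eq_and_sum_sq_eigenvalues_eq (c := 1 / d)
    hherm (by simpa using horth) hsum
  have hlow (i) : m i ≤ extremalLowEigenvalue d :=
    hm i ▸ iInf_le_extremalLowEigenvalue hd (Fintype.card_fin d) (hspec i).1 (hspec i).2
  have habs (i) : -extremalLowEigenvalue d ≤ |m i| := (neg_le_neg (hlow i)).trans (neg_le_abs _)
  have hτ_ge : -extremalLowEigenvalue d ≤ τ :=
    hτ ▸ (habs (Classical.arbitrary _)).trans
      (le_ciSup (f := fun i => |m i|) (Set.finite_range _).bddAbove _)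
  have hneg : -extremalLowEigenvalue d = (√((d : ℝ) + 1) - 1) / d ^ 2 := by
    unfold extremalLowEigenvalue; ring
  have hden : 1 + d ^ 2 * τ = √((d : ℝ) + 1) + d ^ 2 * (τ - -extremalLowEigenvalue d) := by
    unfold extremalLowEigenvalue; field_simp; ring
  refine ⟨hneg ▸ hτ_ge, ?_, ?_⟩
  · rw [hlam, hden]
    exact one_div_le_one_div_of_le (Real.sqrt_pos.mpr (by positivity))
      (le_add_of_nonneg_right (mul_nonneg (by positivity) (sub_nonneg.mpr hτ_ge)))
  calc lamStar = 1 / √((d : ℝ) + 1) ↔ τ = -extremalLowEigenvalue d := by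
        rw [hlam, hden, one_div, one_div, inv_inj, add_eq_left, mul_eq_zero, sub_eq_zero]
        simp [show d ≠ 0 by omega]
    _ ↔ ∀ i, |m i| = -extremalLowEigenvalue d := hτ ▸ ciSup_eq_iff_forall_eq_of_le habs
    _ ↔ ∀ i, m i = extremalLowEigenvalue d := forall_congr' fun i => by
        rw [abs_of_nonpos ((hlow i).trans (extremalLowEigenvalue_nonpos d)), neg_inj]
    _ ↔ ∀ i, ∃ k, (hherm i).eigenvalues k = extremalHighEigenvalue d ∧
          ∀ j ≠ k, (hherm i).eigenvalues j = extremalLowEigenvalue d := forall_congr' fun i => by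
        rw [hm i]
        exact iInf_eq_extremalLowEigenvalue_iff hd (Fintype.card_fin d) (hspec i).1 (hspec i).2
    _ ↔ _ := forall_congr' fun i => by
        rw [← card_filter_eq_one_and_card_filter_eq_iff
          (extremalLowEigenvalue_lt_extremalHighEigenvalue (by omega)).ne', Fintype.card_fin]
        rfl
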